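/- arXiv:1901.01147 — 3 statements merged into one kernel-verified Lean document; each statement's English description precedes it below -/
import Mathlib

section
/- Let u : [a,b] → ℝ be Hölder continuous of order r ∈ (0,1] with constant H and f of bounded variation on [a,b]. Then for all a ≤ t₀ ≤ x ≤ t₁ ≤ b, |∫ₐᵇ f du − [u(x) − u(a)]·f(t₀) − [u(b) − u(x)]·f(t₁)| ≤ H·(t₀−a)^r·V(f;[a,t₀]) + H·( (t₁−t₀)/2 + |x − (t₀+t₁)/2| )^r·V(f;[t₀,t₁]) + H·(b−t₁)^r·V(f;[t₁,b]). -/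
/-- A tagged partition of the interval `[a, b]`. -/
structure TaggedPartition (a b : ℝ) where
  n : ℕ
  pts : ℕ → ℝ
  tag : ℕ → ℝ
  mono : ∀ i, pts i ≤ pts (i + 1)
  first : pts 0 = a
  last : pts n = b
  tag_mem : ∀ i, pts i ≤ tag i ∧ tag i ≤ pts (i + 1)

/-- The Riemann–Stieltjes sum of `f` with respect to `u` over a tagged partition. -/
def RSsum (f u : ℝ → ℝ) {a b : ℝ} (P : TaggedPartition a b) : ℝ :=
  ∑ i ∈ Finset.range P.n, f (P.tag i) * (u (P.pts (i + 1)) - u (P.pts i))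

/-- `IsRSIntegral f u a b I` means the Riemann–Stieltjes integral `∫ₐᵇ f du` exists
and equals `I`: Riemann–Stieltjes sums converge to `I` as the mesh tends to `0`. -/
def IsRSIntegral (f u : ℝ → ℝ) (a b I : ℝ) : Prop :=
  ∀ ε > 0, ∃ δ > 0, ∀ P : TaggedPartition a b,
    (∀ i < P.n, P.pts (i + 1) - P.pts i < δ) → |RSsum f u P - I| < ε

/-- The total (Jordan) variation of `u` on `[a, b]`. -/
noncomputable def totalVar (u : ℝ → ℝ) (a b : ℝ) : ℝ :=
  (eVariationOn u (Set.Icc a b)).toReal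

/-!
Tag partitions at left endpoints and refine `a ≤ t₀ ≤ x ≤ t₁ ≤ b` uniformly. Against the
two-point expression, the Riemann–Stieltjes sum splits into four blocks
`∑ (f pᵢ - f e) (u pᵢ₊₁ - u pᵢ)` over `[c, d]`, where `e ∈ {c, d}` is the end of the block at `t₀`
or `t₁`. Summing by parts with `u` based at the other end kills both boundary terms and leaves
`∑ (f pᵢ₊₁ - f pᵢ) (u pᵢ₊₁ - u base)`, which is at most
`osc(u; [c, d]) · V(f; [c, d]) ≤ H (d - c) ^ r V(f; [c, d])`. On the two middle blocks
`d - c ≤ (t₁ - t₀) / 2 + |x - (t₀ + t₁) / 2|`, and their variations add up to `V(f; [t₀, t₁])`.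
Letting the mesh tend to zero gives the bound for `∫ f du`.
-/

open Finset Set

lemma sum_range_by_parts_sub (g U : ℕ → ℝ) (κ : ℝ) (n : ℕ) :
    ∑ i ∈ range n, g i * (U (i + 1) - U i) =
      g n * (U n - κ) - g 0 * (U 0 - κ) -
        ∑ i ∈ range n, (g (i + 1) - g i) * (U (i + 1) - κ) := by
  induction n with
  | zero => simp
  | succ n ih => rw [sum_range_succ, ih, sum_range_succ]; ring

lemma abs_sum_range_by_parts_sub_le {g U : ℕ → ℝ} {κ B : ℝ} {n : ℕ}
    (hU : ∀ i ≤ n, |U i - κ| ≤ B) :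
    |∑ i ∈ range n, g i * (U (i + 1) - U i) - (g n * (U n - κ) - g 0 * (U 0 - κ))| ≤
      B * ∑ i ∈ range n, |g (i + 1) - g i| := by
  rw [sum_range_by_parts_sub g U κ, sub_sub_cancel_left, abs_neg, mul_sum]
  refine (abs_sum_le_sum_abs _ _).trans (sum_le_sum fun i hi => ?_)
  rw [abs_mul, mul_comm]
  exact mul_le_mul_of_nonneg_right (hU _ (by simp at hi; omega)) (abs_nonneg _)

lemma sum_abs_sub_le_totalVar {f : ℝ → ℝ} {p : ℕ → ℝ} {c d : ℝ} {n : ℕ}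
    (hf : BoundedVariationOn f (Icc c d)) (hp : Monotone p) (hc : c ≤ p 0) (hd : p n ≤ d) :
    ∑ i ∈ range n, |f (p (i + 1)) - f (p i)| ≤ totalVar f c d := by
  have hmem : ∀ i ≤ n, p i ∈ Icc c d := fun i hi =>
    ⟨hc.trans (hp (Nat.zero_le i)), (hp hi).trans hd⟩
  have h := ENNReal.toReal_mono hf
    (eVariationOn.sum_le_of_monotoneOn_Iic (f := f) (hp.monotoneOn _) hmem)
  rw [ENNReal.toReal_sum fun _ _ => edist_ne_top _ _] at h
  simpa only [← dist_edist, Real.dist_eq, totalVar] using h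

lemma totalVar_add {f : ℝ → ℝ} {a b c : ℝ} (hf : BoundedVariationOn f (Icc a c))
    (hab : a ≤ b) (hbc : b ≤ c) :
    totalVar f a b + totalVar f b c = totalVar f a c := by
  have h := eVariationOn.Icc_add_Icc f (s := univ) hab hbc (mem_univ b)
  simp only [univ_inter] at h
  rw [totalVar, totalVar, totalVar, ← h, ENNReal.toReal_add]
  · exact hf.mono (Icc_subset_Icc_right hbc)
  · exact hf.mono (Icc_subset_Icc_left hab)

lemma abs_sub_le_of_holder {u : ℝ → ℝ} {a b H r c d L : ℝ}
    (hu : ∀ s ∈ Icc a b, ∀ t ∈ Icc a b, |u s - u t| ≤ H * |s - t| ^ r) (hH : 0 ≤ H) (hr : 0 ≤ r)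
    (hac : a ≤ c) (hdb : d ≤ b) (hL : d - c ≤ L) :
    ∀ s ∈ Icc c d, ∀ t ∈ Icc c d, |u s - u t| ≤ H * L ^ r := by
  intro s hs t ht
  have hst : |s - t| ≤ L := abs_sub_le_iff.2 ⟨by linarith [hs.2, ht.1], by linarith [hs.1, ht.2]⟩
  calc |u s - u t| ≤ H * |s - t| ^ r :=
        hu s ⟨hac.trans hs.1, hs.2.trans hdb⟩ t ⟨hac.trans ht.1, ht.2.trans hdb⟩
    _ ≤ H * L ^ r := by gcongr

def leftRSSum (f u : ℝ → ℝ) (p : ℕ → ℝ) (n : ℕ) : ℝ :=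
  ∑ i ∈ range n, f (p i) * (u (p (i + 1)) - u (p i))

lemma leftRSSum_sub_mul_eq {f u : ℝ → ℝ} {p : ℕ → ℝ} {n : ℕ} {c d : ℝ} (e : ℝ)
    (hc : p 0 = c) (hd : p n = d) :
    leftRSSum f u p n - f e * (u d - u c) =
      ∑ i ∈ range n, (f (p i) - f e) * (u (p (i + 1)) - u (p i)) := by
  rw [← hc, ← hd, ← sum_range_sub (fun i => u (p i)), mul_sum, leftRSSum, ← sum_sub_distrib]
  exact sum_congr rfl fun i _ => by ring

lemma abs_leftRSSum_sub_mul_right_le {f u : ℝ → ℝ} {p : ℕ → ℝ} {n : ℕ} {c d B : ℝ}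
    (hp : Monotone p) (hc : p 0 = c) (hd : p n = d) (hf : BoundedVariationOn f (Icc c d))
    (hB : ∀ s ∈ Icc c d, ∀ t ∈ Icc c d, |u s - u t| ≤ B) :
    |leftRSSum f u p n - f d * (u d - u c)| ≤ B * totalVar f c d := by
  have hmem : ∀ i ≤ n, p i ∈ Icc c d := fun i hi => ⟨hc ▸ hp (Nat.zero_le i), hd ▸ hp hi⟩
  have hcd : c ∈ Icc c d := ⟨le_rfl, hc ▸ (hmem 0 (Nat.zero_le n)).2⟩
  have key := abs_sum_range_by_parts_sub_le (g := fun i => f (p i) - f d)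
    (U := fun i => u (p i)) (κ := u c) fun i hi => hB _ (hmem i hi) c hcd
  simp only [hc, hd, sub_self, zero_mul, mul_zero, sub_zero, sub_sub_sub_cancel_right] at key
  rw [leftRSSum_sub_mul_eq d hc hd]
  exact key.trans (mul_le_mul_of_nonneg_left (sum_abs_sub_le_totalVar hf hp hc.ge hd.le)
    ((abs_nonneg _).trans (hB c hcd c hcd)))

lemma abs_leftRSSum_sub_mul_left_le {f u : ℝ → ℝ} {p : ℕ → ℝ} {n : ℕ} {c d B : ℝ}
    (hp : Monotone p) (hc : p 0 = c) (hd : p n = d) (hf : BoundedVariationOn f (Icc c d))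
    (hB : ∀ s ∈ Icc c d, ∀ t ∈ Icc c d, |u s - u t| ≤ B) :
    |leftRSSum f u p n - f c * (u d - u c)| ≤ B * totalVar f c d := by
  have hmem : ∀ i ≤ n, p i ∈ Icc c d := fun i hi => ⟨hc ▸ hp (Nat.zero_le i), hd ▸ hp hi⟩
  have hdd : d ∈ Icc c d := hd ▸ hmem n le_rfl
  have key := abs_sum_range_by_parts_sub_le (g := fun i => f (p i) - f c)
    (U := fun i => u (p i)) (κ := u d) fun i hi => hB _ (hmem i hi) d hdd
  simp only [hc, hd, sub_self, zero_mul, mul_zero, sub_zero, sub_sub_sub_cancel_right] at key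
  rw [leftRSSum_sub_mul_eq c hc hd]
  exact key.trans (mul_le_mul_of_nonneg_left (sum_abs_sub_le_totalVar hf hp hc.ge hd.le)
    ((abs_nonneg _).trans (hB d hdd d hdd)))

noncomputable def uniformRefine (q : ℕ → ℝ) (N i : ℕ) : ℝ :=
  q (i / N) + (q (i / N + 1) - q (i / N)) * (i % N : ℕ) / N

lemma uniformRefine_mul_add (q : ℕ → ℝ) {N j : ℕ} (k : ℕ) (hj : j < N) :
    uniformRefine q N (k * N + j) = q k + (q (k + 1) - q k) * j / N := by
  have hdiv : (k * N + j) / N = k := by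
    rw [add_comm, Nat.add_mul_div_right _ _ (by omega), Nat.div_eq_of_lt hj, zero_add]
  have hmod : (k * N + j) % N = j := by
    rw [add_comm, Nat.add_mul_mod_self_right, Nat.mod_eq_of_lt hj]
  simp only [uniformRefine, hdiv, hmod]

lemma uniformRefine_mul (q : ℕ → ℝ) {N : ℕ} (hN : 0 < N) (k : ℕ) :
    uniformRefine q N (k * N) = q k := by
  simpa using uniformRefine_mul_add q k hN

lemma exists_uniformRefine_succ_sub (q : ℕ → ℝ) {N : ℕ} (hN : 0 < N) (i : ℕ) :
    ∃ k, uniformRefine q N (i + 1) - uniformRefine q N i = (q (k + 1) - q k) / N := by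
  obtain ⟨k, j, hj, rfl⟩ : ∃ k j, j < N ∧ i = k * N + j :=
    ⟨i / N, i % N, Nat.mod_lt _ hN, (Nat.div_add_mod' i N).symm⟩
  refine ⟨k, ?_⟩
  have hN' : (N : ℝ) ≠ 0 := by positivity
  rcases (Nat.succ_le_of_lt hj).lt_or_eq with hj' | hj'
  · rw [uniformRefine_mul_add q k hj, add_assoc, uniformRefine_mul_add q k hj']
    push_cast
    field_simp
    ring
  · have hlast : k * N + j + 1 = (k + 1) * N := by rw [← hj', Nat.succ_eq_add_one]; ring
    rw [uniformRefine_mul_add q k hj, hlast, uniformRefine_mul q hN]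
    have : (j : ℝ) = N - 1 := by rw [← hj']; push_cast; ring
    rw [this]
    field_simp
    ring

lemma monotone_uniformRefine {q : ℕ → ℝ} (hq : Monotone q) {N : ℕ} (hN : 0 < N) :
    Monotone (uniformRefine q N) := by
  refine monotone_nat_of_le_succ fun i => ?_
  obtain ⟨k, hk⟩ := exists_uniformRefine_succ_sub q hN i
  have : 0 ≤ (q (k + 1) - q k) / N := div_nonneg (sub_nonneg.2 (hq k.le_succ)) N.cast_nonneg
  linarith

lemma uniformRefine_succ_sub_le {q : ℕ → ℝ} {L : ℝ} (hq : ∀ k, q (k + 1) - q k ≤ L) {N : ℕ}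
    (hN : 0 < N) (i : ℕ) : uniformRefine q N (i + 1) - uniformRefine q N i ≤ L / N := by
  obtain ⟨k, hk⟩ := exists_uniformRefine_succ_sub q hN i
  rw [hk]
  exact div_le_div_of_nonneg_right (hq k) N.cast_nonneg

noncomputable def TaggedPartition.ofUniformRefine {a b : ℝ} {q : ℕ → ℝ} (hq : Monotone q)
    (K : ℕ) {N : ℕ} (hN : 0 < N) (ha : q 0 = a) (hb : q K = b) : TaggedPartition a b where
  n := K * N
  pts := uniformRefine q N
  tag := uniformRefine q N
  mono i := monotone_uniformRefine hq hN i.le_succ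
  first := by simpa [ha] using uniformRefine_mul q hN 0
  last := (uniformRefine_mul q hN K).trans hb
  tag_mem i := ⟨le_rfl, monotone_uniformRefine hq hN i.le_succ⟩

lemma sum_range_mul_eq_sum_sum (h : ℕ → ℝ) (K N : ℕ) :
    ∑ i ∈ range (K * N), h i = ∑ k ∈ range K, ∑ j ∈ range N, h (k * N + j) := by
  induction K with
  | zero => simp
  | succ K ih => rw [Nat.succ_mul, sum_range_add, ih, sum_range_succ]

lemma RSsum_ofUniformRefine (f u : ℝ → ℝ) {a b : ℝ} {q : ℕ → ℝ} (hq : Monotone q) (K : ℕ)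
    {N : ℕ} (hN : 0 < N) (ha : q 0 = a) (hb : q K = b) :
    RSsum f u (.ofUniformRefine hq K hN ha hb) =
      ∑ k ∈ range K, leftRSSum f u (fun j => uniformRefine q N (k * N + j)) N :=
  sum_range_mul_eq_sum_sum _ K N

lemma abs_RSsum_ofUniformRefine_sub_le {f u : ℝ → ℝ} {a t0 x t1 b B₀ B₁ B₂ B₃ : ℝ}
    {q : ℕ → ℝ} (hq : Monotone q) {N : ℕ} (hN : 0 < N) (ha : q 0 = a) (h1 : q 1 = t0)
    (h2 : q 2 = x) (h3 : q 3 = t1) (hb : q 4 = b) (hf : BoundedVariationOn f (Icc a b))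
    (hB₀ : ∀ s ∈ Icc a t0, ∀ t ∈ Icc a t0, |u s - u t| ≤ B₀)
    (hB₁ : ∀ s ∈ Icc t0 x, ∀ t ∈ Icc t0 x, |u s - u t| ≤ B₁)
    (hB₂ : ∀ s ∈ Icc x t1, ∀ t ∈ Icc x t1, |u s - u t| ≤ B₂)
    (hB₃ : ∀ s ∈ Icc t1 b, ∀ t ∈ Icc t1 b, |u s - u t| ≤ B₃) :
    |RSsum f u (.ofUniformRefine hq 4 hN ha hb) - ((u x - u a) * f t0 + (u b - u x) * f t1)| ≤
      B₀ * totalVar f a t0 + B₁ * totalVar f t0 x + B₂ * totalVar f x t1 +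
        B₃ * totalVar f t1 b := by
  subst ha h1 h2 h3 hb
  set p : ℕ → ℕ → ℝ := fun k j => uniformRefine q N (k * N + j)
  have hp (k : ℕ) : Monotone (p k) :=
    (monotone_uniformRefine hq hN).comp fun _ _ h => Nat.add_le_add_left h _
  have hp0 (k : ℕ) : p k 0 = q k := uniformRefine_mul q hN k
  have hpN (k : ℕ) : p k N = q (k + 1) := by
    simp only [p, ← Nat.succ_mul, uniformRefine_mul q hN]
  have hf' {i j : ℕ} (hj : j ≤ 4) : BoundedVariationOn f (Icc (q i) (q j)) :=
    hf.mono (Icc_subset_Icc (hq i.zero_le) (hq hj))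
  have h₀ := abs_leftRSSum_sub_mul_right_le (hp 0) (hp0 0) (hpN 0) (hf' (by norm_num)) hB₀
  have h₁ := abs_leftRSSum_sub_mul_left_le (hp 1) (hp0 1) (hpN 1) (hf' (by norm_num)) hB₁
  have h₂ := abs_leftRSSum_sub_mul_right_le (hp 2) (hp0 2) (hpN 2) (hf' (by norm_num)) hB₂
  have h₃ := abs_leftRSSum_sub_mul_left_le (hp 3) (hp0 3) (hpN 3) (hf' (by norm_num)) hB₃
  rw [RSsum_ofUniformRefine]
  simp only [sum_range_succ, sum_range_zero, zero_add]
  set S := leftRSSum f u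
  show |S (p 0) N + S (p 1) N + S (p 2) N + S (p 3) N - _| ≤ _
  calc _ = |(S (p 0) N - f (q 1) * (u (q 1) - u (q 0))) +
          (S (p 1) N - f (q 1) * (u (q 2) - u (q 1))) +
          (S (p 2) N - f (q 3) * (u (q 3) - u (q 2))) +
          (S (p 3) N - f (q 3) * (u (q 4) - u (q 3)))| := by
        congr 1; ring
    _ ≤ _ := (abs_add_le _ _).trans (add_le_add_left (abs_add_three _ _ _) _)
    _ ≤ _ := by linarith

lemma IsRSIntegral.abs_sub_le {f u : ℝ → ℝ} {a b I J R L : ℝ} (hI : IsRSIntegral f u a b I)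
    (P : ℕ → TaggedPartition a b)
    (hmesh : ∀ N, ∀ i < (P N).n, (P N).pts (i + 1) - (P N).pts i ≤ L / (N + 1))
    (hP : ∀ N, |RSsum f u (P N) - J| ≤ R) : |I - J| ≤ R := by
  refine le_of_forall_pos_le_add fun ε hε => ?_
  obtain ⟨δ, hδ, hδP⟩ := hI ε hε
  obtain ⟨N, hN⟩ := exists_nat_gt (L / δ)
  have hLN : L / (N + 1) < δ := by
    rw [div_lt_iff₀ (by positivity)]
    rw [div_lt_iff₀ hδ] at hN
    nlinarith
  have hI' := hδP (P N) fun i hi => (hmesh N i hi).trans_lt hLN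
  calc |I - J| ≤ |I - RSsum f u (P N)| + |RSsum f u (P N) - J| := _root_.abs_sub_le _ _ _
    _ ≤ R + ε := by rw [abs_sub_comm]; linarith [hP N]

theorem two_point_dual_refined_bounded_variation_general
    (a b H r t0 x t1 I : ℝ) (f u : ℝ → ℝ)
    (hr : 0 < r) (hH : 0 ≤ H)
    (hu : ∀ s ∈ Set.Icc a b, ∀ t ∈ Set.Icc a b, |u s - u t| ≤ H * |s - t| ^ r)
    (hf : BoundedVariationOn f (Set.Icc a b))
    (ht0 : a ≤ t0) (ht0x : t0 ≤ x) (hxt1 : x ≤ t1) (ht1 : t1 ≤ b)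
    (hI : IsRSIntegral f u a b I) :
    |I - (u x - u a) * f t0 - (u b - u x) * f t1| ≤
      H * (t0 - a) ^ r * totalVar f a t0 +
        H * ((t1 - t0) / 2 + |x - (t0 + t1) / 2|) ^ r * totalVar f t0 t1 +
        H * (b - t1) ^ r * totalVar f t1 b := by
  have hxM : x - t0 ≤ (t1 - t0) / 2 + |x - (t0 + t1) / 2| := by
    linarith [le_abs_self (x - (t0 + t1) / 2)]
  have hMx : t1 - x ≤ (t1 - t0) / 2 + |x - (t0 + t1) / 2| := by
    linarith [neg_abs_le (x - (t0 + t1) / 2)]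
  let q : ℕ → ℝ := fun k =>
    if k = 0 then a else if k = 1 then t0 else if k = 2 then x else if k = 3 then t1 else b
  have hq : Monotone q := monotone_nat_of_le_succ fun k => by
    rcases k with _ | _ | _ | _ | k <;> simp [q] <;> linarith
  have hqab (k : ℕ) : a ≤ q k ∧ q k ≤ b :=
    ⟨hq k.zero_le, (hq (k.le_add_right 4)).trans (by simp [q])⟩
  have hosc {c d L : ℝ} (hac : a ≤ c) (hdb : d ≤ b) (hL : d - c ≤ L) :=
    abs_sub_le_of_holder hu hH hr.le hac hdb hL
  rw [sub_sub]
  refine hI.abs_sub_le (fun N => .ofUniformRefine hq 4 N.succ_pos rfl rfl)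
    (fun N i _ => by
      exact_mod_cast uniformRefine_succ_sub_le (L := b - a)
        (fun k => by linarith [hqab k, hqab (k + 1)]) N.succ_pos i)
    fun N => ?_
  refine (abs_RSsum_ofUniformRefine_sub_le (a := a) (t0 := t0) (x := x) (t1 := t1) (b := b)
    hq N.succ_pos rfl rfl rfl rfl rfl hf
    (hosc le_rfl (ht0x.trans (hxt1.trans ht1)) le_rfl) (hosc ht0 (hxt1.trans ht1) hxM)
    (hosc (ht0.trans ht0x) ht1 hMx) (hosc (ht0.trans (ht0x.trans hxt1)) le_rfl le_rfl)).trans_eq ?_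
  rw [← totalVar_add (hf.mono (Icc_subset_Icc ht0 ht1)) ht0x hxt1]
  ring

theorem two_point_dual_refined_bounded_variation
    (a b H r t0 x t1 I : ℝ) (f u : ℝ → ℝ)
    (hr : 0 < r) (hr1 : r ≤ 1) (hH : 0 ≤ H)
    (hu : ∀ s ∈ Set.Icc a b, ∀ t ∈ Set.Icc a b, |u s - u t| ≤ H * |s - t| ^ r)
    (hf : BoundedVariationOn f (Set.Icc a b))
    (ht0 : a ≤ t0) (ht0x : t0 ≤ x) (hxt1 : x ≤ t1) (ht1 : t1 ≤ b)
    (hI : IsRSIntegral f u a b I) :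
    |I - (u x - u a) * f t0 - (u b - u x) * f t1| ≤
      H * (t0 - a) ^ r * totalVar f a t0 +
        H * ((t1 - t0) / 2 + |x - (t0 + t1) / 2|) ^ r * totalVar f t0 t1 +
        H * (b - t1) ^ r * totalVar f t1 b :=
  two_point_dual_refined_bounded_variation_general a b H r t0 x t1 I f u hr hH hu hf ht0 ht0x hxt1
    ht1 hI
end

section
/- For every r ∈ (0,1] and constant C > 0 such that the inequality |∫ₐᵇ f du − [u(x)−u(a)]f(t₀) − [u(b)−u(x)]f(t₁)| ≤ H·max{ C(x−a)+|t₀−(a+x)/2|, C(b−x)+|t₁−(x+b)/2| }^r · V(u;[a,b]) holds for all f Hölder of order r with constant H, all u of bounded variation, and all a ≤ t₀ ≤ x ≤ t₁ ≤ b, one must have C ≥ 1/2. -/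
/-- subadditivity of `x ↦ x^r` for `r ≤ 1` on nonnegative reals -/
lemma rpow_add_le_add_rpow_real {r : ℝ} (hr : 0 ≤ r) (hr1 : r ≤ 1)
    {x y : ℝ} (hx : 0 ≤ x) (hy : 0 ≤ y) : (x + y) ^ r ≤ x ^ r + y ^ r := by
  have h0 := NNReal.rpow_add_le_add_rpow x.toNNReal y.toNNReal hr hr1
  have h2 := (NNReal.coe_le_coe).2 h0
  push_cast at h2
  rwa [Real.coe_toNNReal _ hx, Real.coe_toNNReal _ hy] at h2

/-- Hölder property of `t ↦ |t|^r` on nonnegative reals. -/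
lemma holder_abs_rpow {r : ℝ} (hr : 0 < r) (hr1 : r ≤ 1)
    {s t : ℝ} (hs : 0 ≤ s) (ht : 0 ≤ t) : |s ^ r - t ^ r| ≤ |s - t| ^ r := by
  wlog hts : t ≤ s generalizing s t
  · rw [abs_sub_comm, abs_sub_comm s t]; exact this ht hs (le_of_not_ge hts)
  have key : s ^ r ≤ t ^ r + (s - t) ^ r := by
    have := rpow_add_le_add_rpow_real hr.le hr1 ht (sub_nonneg.2 hts)
    rwa [add_sub_cancel] at this
  rw [abs_of_nonneg (sub_nonneg.2 (Real.rpow_le_rpow ht hts hr.le)),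
    abs_of_nonneg (sub_nonneg.2 hts)]
  linarith

theorem two_point_quadrature_sharpness
    (r C : ℝ) (hr : 0 < r) (hr1 : r ≤ 1) (hC : 0 < C)
    (h : ∀ (a b H t0 x t1 I : ℝ) (f u : ℝ → ℝ), 0 ≤ H →
      (∀ s ∈ Set.Icc a b, ∀ t ∈ Set.Icc a b, |f s - f t| ≤ H * |s - t| ^ r) →
      BoundedVariationOn u (Set.Icc a b) →
      a ≤ t0 → t0 ≤ x → x ≤ t1 → t1 ≤ b →
      IsRSIntegral f u a b I →
      |I - (u x - u a) * f t0 - (u b - u x) * f t1| ≤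
        H * (max (C * (x - a) + |t0 - (a + x) / 2|) (C * (b - x) + |t1 - (x + b) / 2|)) ^ r *
          totalVar u a b) :
    1 / 2 ≤ C := by
  set f : ℝ → ℝ := fun t => |t| ^ r with hf
  set u : ℝ → ℝ := fun t => if t ≤ 0 then (-1 : ℝ) else 0 with hu
  -- u is monotone
  have humono : Monotone u := by
    intro s t hst
    simp only [hu]
    by_cases hts : t ≤ 0
    · rw [if_pos hts, if_pos (hst.trans hts)]
    · rw [if_neg hts]
      by_cases hss : s ≤ 0 <;> simp [hss]
  have huvals : ∀ t : ℝ, -1 ≤ u t ∧ u t ≤ 0 := by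
    intro t; simp only [hu]; by_cases ht : t ≤ 0 <;> simp [ht]
  -- bounded variation and totalVar ≤ 1
  have hvar_le : eVariationOn u (Set.Icc (0:ℝ) 1) ≤ ENNReal.ofReal 1 := by
    have := (humono.monotoneOn (Set.Icc (0:ℝ) 1)).eVariationOn_le
      (Set.left_mem_Icc.2 zero_le_one) (Set.right_mem_Icc.2 zero_le_one)
    have heq : Set.Icc (0:ℝ) 1 ∩ Set.Icc 0 1 = Set.Icc (0:ℝ) 1 := Set.inter_self _
    rw [heq] at this
    have : eVariationOn u (Set.Icc (0:ℝ) 1) ≤ ENNReal.ofReal (u 1 - u 0) := this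
    have hval : u 1 - u 0 = 1 := by norm_num [hu]
    rwa [hval] at this
  have hbv : BoundedVariationOn u (Set.Icc (0:ℝ) 1) :=
    ne_top_of_le_ne_top (by simp) hvar_le
  have htv_le : totalVar u 0 1 ≤ 1 := by
    have := ENNReal.toReal_mono (by simp) hvar_le
    simpa [totalVar] using this
  -- Hölder condition for f with H = 1
  have hhold : ∀ s ∈ Set.Icc (0:ℝ) 1, ∀ t ∈ Set.Icc (0:ℝ) 1,
      |f s - f t| ≤ 1 * |s - t| ^ r := by
    intro s hs t ht
    rw [one_mul]
    simp only [hf]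
    rw [abs_of_nonneg hs.1, abs_of_nonneg ht.1]
    exact holder_abs_rpow hr hr1 hs.1 ht.1
  -- the integral ∫₀¹ f du = 0
  have hint : IsRSIntegral f u 0 1 0 := by
    intro ε hε
    refine ⟨min 1 ((ε/2) ^ (1/r)), lt_min one_pos (Real.rpow_pos_of_pos (by linarith) _), ?_⟩
    intro P hmesh
    have hpmono : Monotone P.pts := monotone_nat_of_le_succ P.mono
    have hpnn : ∀ i, 0 ≤ P.pts i := fun i => by
      have := hpmono (Nat.zero_le i); rwa [P.first] at this
    -- each term bounded by (ε/2) * (u (p (i+1)) - u (p i))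
    have hterm : ∀ i ∈ Finset.range P.n,
        f (P.tag i) * (u (P.pts (i+1)) - u (P.pts i))
          ≤ (ε/2) * (u (P.pts (i+1)) - u (P.pts i)) ∧
        0 ≤ f (P.tag i) * (u (P.pts (i+1)) - u (P.pts i)) := by
      intro i hi
      rw [Finset.mem_range] at hi
      have hd : 0 ≤ u (P.pts (i+1)) - u (P.pts i) :=
        sub_nonneg.2 (humono (P.mono i))
      have hfnn : 0 ≤ f (P.tag i) := Real.rpow_nonneg (abs_nonneg _) _
      refine ⟨?_, mul_nonneg hfnn hd⟩
      rcases eq_or_lt_of_le hd with hd0 | hd0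
      · rw [← hd0, mul_zero, mul_zero]
      · -- here u jumps: p i = 0, so tag i ∈ [0, p(i+1)) small
        have hpi0 : P.pts i = 0 := by
          by_contra hne
          have hpos : 0 < P.pts i := lt_of_le_of_ne (hpnn i) (Ne.symm hne)
          have : u (P.pts i) = 0 := by simp [hu, not_le.2 hpos]
          have h2 : u (P.pts (i+1)) ≤ 0 := (huvals _).2
          linarith
        have htag : 0 ≤ P.tag i ∧ P.tag i < min 1 ((ε/2) ^ (1/r)) := by
          constructor
          · have := (P.tag_mem i).1; rw [hpi0] at this; exact this
          · have h1 := (P.tag_mem i).2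
            have h2 := hmesh i hi
            rw [hpi0, sub_zero] at h2
            exact lt_of_le_of_lt h1 h2
        have hfle : f (P.tag i) ≤ ε/2 := by
          have h1 : f (P.tag i) ≤ ((ε/2) ^ (1/r)) ^ r := by
            simp only [hf]
            rw [abs_of_nonneg htag.1]
            exact Real.rpow_le_rpow htag.1
              (le_of_lt (lt_of_lt_of_le htag.2 (min_le_right _ _))) hr.le
          have h2 : ((ε/2:ℝ) ^ (1/r)) ^ r = ε/2 := by
            rw [← Real.rpow_mul (by linarith), one_div, inv_mul_cancel₀ hr.ne', Real.rpow_one]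
          rw [h2] at h1; exact h1
        exact mul_le_mul_of_nonneg_right hfle hd
    have hsum : RSsum f u P ≤ (ε/2) * 1 ∧ 0 ≤ RSsum f u P := by
      constructor
      · have : RSsum f u P ≤ ∑ i ∈ Finset.range P.n,
            (ε/2) * (u (P.pts (i+1)) - u (P.pts i)) :=
          Finset.sum_le_sum fun i hi => (hterm i hi).1
        rw [← Finset.mul_sum, Finset.sum_range_sub (fun i => u (P.pts i)),
          P.first, P.last] at this
        have : RSsum f u P ≤ ε/2 * (u 1 - u 0) := this
        have hval : u 1 - u 0 = 1 := by norm_num [hu]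
        rwa [hval] at this
      · exact Finset.sum_nonneg fun i hi => (hterm i hi).2
    rw [sub_zero, abs_of_nonneg hsum.2]
    calc RSsum f u P ≤ ε/2 * 1 := hsum.1
      _ < ε := by linarith
  -- apply the hypothesis
  have key := h 0 1 1 (1/2) 1 1 0 f u zero_le_one hhold hbv
    (by norm_num) (by norm_num) le_rfl le_rfl hint
  have hu1 : u 1 = 0 := by norm_num [hu]
  have hu0 : u 0 = -1 := by norm_num [hu]
  have hf12 : f (1/2) = (1/2 : ℝ) ^ r := by
    simp only [hf]; rw [abs_of_nonneg (by norm_num : (0:ℝ) ≤ 1/2)]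
  rw [hu1, hu0] at key
  have hmax : max (C * ((1:ℝ) - 0) + |1/2 - (0 + 1) / 2|)
      (C * (1 - 1) + |1 - (1 + 1) / 2|) = C := by
    have e0 : C * ((1:ℝ) - 0) + |1/2 - (0 + 1) / 2| = C := by norm_num
    have e1 : C * ((1:ℝ) - 1) + |1 - (1 + 1) / 2| = 0 := by norm_num
    rw [e0, e1, max_eq_left hC.le]
  rw [hmax, hf12] at key
  have hlhs : |(0:ℝ) - (0 - -1) * (1/2:ℝ)^r - (0 - 0) * f 1| = (1/2:ℝ)^r := by
    have hp : (0:ℝ) ≤ (1/2:ℝ)^r := Real.rpow_nonneg (by norm_num) _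
    rw [show (0:ℝ) - (0 - -1) * (1/2:ℝ)^r - (0 - 0) * f 1 = -((1/2:ℝ)^r) by ring,
      abs_neg, abs_of_nonneg hp]
  rw [hlhs, one_mul] at key
  have hCr : (1/2 : ℝ) ^ r ≤ C ^ r := by
    calc (1/2:ℝ)^r ≤ C ^ r * totalVar u 0 1 := key
      _ ≤ C ^ r * 1 := by
          exact mul_le_mul_of_nonneg_left htv_le (Real.rpow_nonneg hC.le _)
      _ = C ^ r := mul_one _
  by_contra hlt
  push_neg at hlt
  have : C ^ r < (1/2:ℝ) ^ r := Real.rpow_lt_rpow hC.le hlt hr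
  linarith
end

section
/- Let g : [a,b] → ℝ be continuous and f : [a,b] → ℝ Hölder continuous of order r ∈ (0,1] with constant H. With G(α,β) := (1/(β−α))·∫_α^β g(t) dt for α < β, and u(t) := ∫ₐᵗ g(s) ds, the two-point trapezoid estimate gives for all x ∈ (a,b): |[∫ₐˣ g]·f(a) + [∫ₓᵇ g]·f(b) − ∫ₐᵇ f(s)g(s) ds| ≤ H·((b−a)/2 + |x − (a+b)/2|)^r · ∫ₐᵇ |g(t)| dt. -/
/-
Splitting at `x`, the quantity becomes `∫ₐˣ (f a - f s) g s + ∫ₓᵇ (f b - f s) g s`.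
Points of `[a, x]` lie within `x - a` of `a`, points of `[x, b]` within `b - x` of `b`, and
`max (x - a) (b - x) = (b - a)/2 + |x - (a + b)/2|`; so Hölder continuity bounds both weights
by `H · ((b - a)/2 + |x - (a + b)/2|) ^ r`.
-/

open Set intervalIntegral
open MeasureTheory (volume)

lemma ContinuousOn.intervalIntegrable_of_mem_Icc {φ : ℝ → ℝ} {a b x : ℝ}
    (hφ : ContinuousOn φ (Icc a b)) (hx : x ∈ Icc a b) :
    IntervalIntegrable φ volume a x ∧ IntervalIntegrable φ volume x b :=
  ⟨(hφ.mono (Icc_subset_Icc_right hx.2)).intervalIntegrable_of_Icc hx.1,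
    (hφ.mono (Icc_subset_Icc_left hx.1)).intervalIntegrable_of_Icc hx.2⟩

lemma holderOnWith_of_dist_le {X Y : Type*} [PseudoMetricSpace X] [PseudoMetricSpace Y]
    {f : X → Y} {s : Set X} {C r : ℝ} (hC : 0 ≤ C) (hr : 0 ≤ r)
    (h : ∀ x ∈ s, ∀ y ∈ s, dist (f x) (f y) ≤ C * dist x y ^ r) :
    HolderOnWith C.toNNReal r.toNNReal f s := by
  intro x hx y hy
  rw [edist_dist, edist_dist, Real.coe_toNNReal r hr,
    ENNReal.ofReal_rpow_of_nonneg dist_nonneg hr, ← ENNReal.ofReal.eq_def,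
    ← ENNReal.ofReal_mul hC]
  exact ENNReal.ofReal_le_ofReal (h x hx y hy)

lemma abs_sub_le_mul_rpow_of_abs_sub_le {f : ℝ → ℝ} {s : Set ℝ} {H r M p t : ℝ}
    (hH : 0 ≤ H) (hr : 0 ≤ r) (hf : ∀ u ∈ s, ∀ v ∈ s, |f u - f v| ≤ H * |u - v| ^ r)
    (hp : p ∈ s) (ht : t ∈ s) (hpt : |p - t| ≤ M) :
    |f p - f t| ≤ H * M ^ r :=
  (hf p hp t ht).trans <| mul_le_mul_of_nonneg_left (Real.rpow_le_rpow (abs_nonneg _) hpt hr) hH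

lemma abs_integral_mul_sub_integral_mul_le {f g : ℝ → ℝ} {a b c K : ℝ} (hab : a ≤ b)
    (hg : IntervalIntegrable g volume a b)
    (hfg : IntervalIntegrable (fun s => f s * g s) volume a b)
    (hK : ∀ s ∈ Icc a b, |c - f s| ≤ K) :
    |(∫ s in a..b, g s) * c - ∫ s in a..b, f s * g s| ≤ K * ∫ s in a..b, |g s| := by
  have hweighted : (∫ s in a..b, g s) * c - ∫ s in a..b, f s * g s
      = ∫ s in a..b, (c - f s) * g s := by
    simp only [sub_mul]
    rw [integral_sub (hg.const_mul c) hfg, integral_const_mul, mul_comm]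
  rw [hweighted, ← integral_const_mul, ← Real.norm_eq_abs]
  refine norm_integral_le_of_norm_le hab (Filter.Eventually.of_forall fun s hs => ?_)
    (hg.abs.const_mul K)
  rw [Real.norm_eq_abs, abs_mul]
  exact mul_le_mul_of_nonneg_right (hK s (Ioc_subset_Icc_self hs)) (abs_nonneg _)

lemma abs_integral_mul_sub_integral_mul_le_of_holder {f g : ℝ → ℝ} {s : Set ℝ}
    {a b p H r M : ℝ} (hab : a ≤ b) (hg : IntervalIntegrable g volume a b)
    (hfg : IntervalIntegrable (fun t => f t * g t) volume a b) (hH : 0 ≤ H) (hr : 0 ≤ r)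
    (hf : ∀ u ∈ s, ∀ v ∈ s, |f u - f v| ≤ H * |u - v| ^ r) (hp : p ∈ s)
    (hs : Icc a b ⊆ s) (hpM : ∀ t ∈ Icc a b, |p - t| ≤ M) :
    |(∫ t in a..b, g t) * f p - ∫ t in a..b, f t * g t| ≤ H * M ^ r * ∫ t in a..b, |g t| :=
  abs_integral_mul_sub_integral_mul_le hab hg hfg fun t ht =>
    abs_sub_le_mul_rpow_of_abs_sub_le hH hr hf hp (hs ht) (hpM t ht)

theorem two_point_trapezoid_weighted_integral_general
    (a b H r x : ℝ) (f g : ℝ → ℝ)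
    (hr : 0 < r) (hH : 0 ≤ H)
    (hf : ∀ s ∈ Set.Icc a b, ∀ t ∈ Set.Icc a b, |f s - f t| ≤ H * |s - t| ^ r)
    (hg : ContinuousOn g (Set.Icc a b))
    (hax : a < x) (hxb : x < b) :
    |(∫ s in a..x, g s) * f a + (∫ s in x..b, g s) * f b - ∫ s in a..b, f s * g s| ≤
      H * ((b - a) / 2 + |x - (a + b) / 2|) ^ r * ∫ t in a..b, |g t| := by
  have hx : x ∈ Icc a b := ⟨hax.le, hxb.le⟩
  have hab : a ≤ b := hax.le.trans hxb.le
  have hfc : ContinuousOn f (Icc a b) :=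
    (holderOnWith_of_dist_le hH hr.le hf).continuousOn (Real.toNNReal_pos.2 hr)
  obtain ⟨hg₁, hg₂⟩ := hg.intervalIntegrable_of_mem_Icc hx
  have hfgc : ContinuousOn (fun s => f s * g s) (Icc a b) := hfc.mul hg
  obtain ⟨hfg₁, hfg₂⟩ := hfgc.intervalIntegrable_of_mem_Icc hx
  have hleft := abs_integral_mul_sub_integral_mul_le_of_holder hax.le hg₁ hfg₁ hH hr.le hf
    (left_mem_Icc.2 hab) (Icc_subset_Icc_right hxb.le) (M := (b - a) / 2 + |x - (a + b) / 2|)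
    fun t ht => by
      rw [abs_sub_comm, abs_of_nonneg (sub_nonneg.2 ht.1)]
      linarith [ht.2, le_abs_self (x - (a + b) / 2)]
  have hright := abs_integral_mul_sub_integral_mul_le_of_holder hxb.le hg₂ hfg₂ hH hr.le hf
    (right_mem_Icc.2 hab) (Icc_subset_Icc_left hax.le) (M := (b - a) / 2 + |x - (a + b) / 2|)
    fun t ht => by
      rw [abs_of_nonneg (sub_nonneg.2 ht.2)]
      linarith [ht.1, neg_abs_le (x - (a + b) / 2)]
  rw [← integral_add_adjacent_intervals hfg₁ hfg₂,
    ← integral_add_adjacent_intervals hg₁.abs hg₂.abs, mul_add]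
  calc _ = |((∫ s in a..x, g s) * f a - ∫ s in a..x, f s * g s)
          + ((∫ s in x..b, g s) * f b - ∫ s in x..b, f s * g s)| := by ring_nf
    _ ≤ _ := (abs_add_le _ _).trans (add_le_add hleft hright)

theorem two_point_trapezoid_weighted_integral
    (a b H r x : ℝ) (f g : ℝ → ℝ)
    (hr : 0 < r) (hr1 : r ≤ 1) (hH : 0 ≤ H)
    (hf : ∀ s ∈ Set.Icc a b, ∀ t ∈ Set.Icc a b, |f s - f t| ≤ H * |s - t| ^ r)
    (hg : ContinuousOn g (Set.Icc a b))
    (hax : a < x) (hxb : x < b) :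
    |(∫ s in a..x, g s) * f a + (∫ s in x..b, g s) * f b - ∫ s in a..b, f s * g s| ≤
      H * ((b - a) / 2 + |x - (a + b) / 2|) ^ r * ∫ t in a..b, |g t| :=
  two_point_trapezoid_weighted_integral_general a b H r x f g hr hH hf hg hax hxb
end
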